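/- arXiv:2603.21037 — 5 statements merged into one kernel-verified Lean document; each statement's English description precedes it below -/
import Mathlib

section
/- For every D > 0 there exists a constant C ≥ 1 with the following property: for every matrix A ∈ SL(2,ℝ) with |tr A| ≥ 2 (i.e. A is not elliptic, so the Möbius transformation it induces is hyperbolic or parabolic or the identity) and for all points z, w in the upper half-plane ℍ with d_ℍ(z, w) ≤ D, one has d_ℍ(w, A·w) ≤ C · d_ℍ(z, A·z). -/
open UpperHalfPlane Matrix
open scoped MatrixGroups

/-!
For `g = !![a, b; c, d] ∈ SL(2, ℝ)` one has
`sinh (d(z, g • z) / 2) = |c z² + (d - a) z - b| / (2 Im z)`, and the quadratic vanishes at the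
fixed points of `g`. Its discriminant is `tr² g - 4`, so for non-elliptic `g` it splits into two
real linear factors `p z - q`. Each `|p z - q|² / Im z` is `1 / Im (h • z)` for some
`h ∈ SL(2, ℝ)`, hence changes by at most a factor `exp (d(z, w))` between `z` and `w`. Thus
`sinh (d(w, g • w) / 2) ≤ e^{d(z, w)} sinh (d(z, g • z) / 2)`, and convexity of `sinh` on
`[0, ∞)` turns this into `d(w, g • w) ≤ e^{d(z, w)} d(z, g • z)`.
-/

open Real

lemma Real.convexOn_sinh_Ici : ConvexOn ℝ (Set.Ici 0) sinh := by
  refine MonotoneOn.convexOn_of_deriv (convex_Ici 0) continuous_sinh.continuousOn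
    differentiable_sinh.differentiableOn ?_
  rw [deriv_sinh, interior_Ici]
  intro x hx y hy hxy
  rw [cosh_le_cosh, abs_of_pos hx, abs_of_pos hy]
  exact hxy

lemma Real.mul_sinh_le_sinh_mul {K t : ℝ} (hK : 1 ≤ K) (ht : 0 ≤ t) :
    K * sinh t ≤ sinh (K * t) := by
  have hK₀ : 0 < K := zero_lt_one.trans_le hK
  have h := convexOn_sinh_Ici.2 (Set.mem_Ici.2 (mul_nonneg hK₀.le ht)) Set.self_mem_Ici
    (inv_nonneg.2 hK₀.le) (sub_nonneg.2 (inv_le_one_of_one_le₀ hK)) (add_sub_cancel _ _)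
  simp only [smul_eq_mul, sinh_zero, mul_zero, add_zero] at h
  rw [inv_mul_cancel_left₀ hK₀.ne'] at h
  calc K * sinh t ≤ K * (K⁻¹ * sinh (K * t)) := mul_le_mul_of_nonneg_left h hK₀.le
    _ = sinh (K * t) := mul_inv_cancel_left₀ hK₀.ne' _

lemma exists_real_linear_factors {a b c : ℝ} (h : 0 ≤ discrim a b c) :
    ∃ p₁ q₁ p₂ q₂ : ℝ, ∀ ζ : ℂ, a * ζ ^ 2 + b * ζ + c = (p₁ * ζ - q₁) * (p₂ * ζ - q₂) := by
  rcases eq_or_ne a 0 with rfl | ha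
  · exact ⟨b, -c, 0, -1, fun ζ => by push_cast; ring⟩
  -- `(2aζ + b - s) (2aζ + b + s) = 4a (aζ² + bζ + c)` for `s = √(discrim a b c)`
  set s := √(discrim a b c)
  have hs : (s : ℂ) * s = b ^ 2 - 4 * a * c := by
    exact_mod_cast (mul_self_sqrt h : s * s = b ^ 2 - 4 * a * c)
  refine ⟨2 * a, s - b, 1 / 2, -(b + s) / (4 * a), fun ζ => ?_⟩
  have ha' : (a : ℂ) ≠ 0 := by exact_mod_cast ha
  push_cast
  field_simp
  linear_combination 2 * hs

lemma Matrix.SpecialLinearGroup.discrim_eq_trace_sq_sub_four (g : SL(2, ℝ)) :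
    discrim (g 1 0) (g 1 1 - g 0 0) (-g 0 1) = trace (g : Matrix (Fin 2) (Fin 2) ℝ) ^ 2 - 4 := by
  have hdet : g 0 0 * g 1 1 - g 0 1 * g 1 0 = 1 := by
    have := g.det_coe
    rwa [det_fin_two] at this
  rw [discrim, trace_fin_two]
  linear_combination -4 * hdet

namespace UpperHalfPlane

lemma im_specialLinearGroup_smul (g : SL(2, ℝ)) (z : ℍ) :
    (g • z).im = z.im / Complex.normSq (g 1 0 * z + g 1 1) := by
  have h := im_smul_eq_div_normSq (SpecialLinearGroup.mapGL ℝ g) z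
  simp [denom] at h
  exact h

lemma sinh_half_dist_smul_self (g : SL(2, ℝ)) (z : ℍ) :
    sinh (dist z (g • z) / 2) =
      ‖g 1 0 * (z : ℂ) ^ 2 + (g 1 1 - g 0 0) * z - g 0 1‖ / z.im / 2 := by
  set δ : ℂ := g 1 0 * z + g 1 1
  have hδ : δ ≠ 0 := by
    simpa [denom] using denom_ne_zero (SpecialLinearGroup.mapGL ℝ g) z
  have hsqrt : √(z.im * (g • z).im) = z.im / ‖δ‖ := by
    rw [im_specialLinearGroup_smul, ← Complex.sq_norm, ← mul_div_assoc, ← sq, ← div_pow]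
    exact sqrt_sq (div_nonneg z.im_pos.le (norm_nonneg δ))
  have hcoe : ((g • z : ℍ) : ℂ) = (g 0 0 * z + g 0 1) / δ := by
    simpa using coe_specialLinearGroup_apply g z
  rw [sinh_half_dist, hsqrt, Complex.dist_eq, hcoe,
    show (z : ℂ) - (g 0 0 * z + g 0 1) / δ
      = (g 1 0 * (z : ℂ) ^ 2 + (g 1 1 - g 0 0) * z - g 0 1) / δ by field_simp; ring,
    norm_div]
  have := z.im_pos
  have := norm_pos_iff.2 hδ
  field_simp

/-- `|p z - q|² / Im z = 1 / Im (h • z)` for any `h ∈ SL(2, ℝ)` with bottom row `(p, -q)`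
(up to a positive constant, the exponential of a Busemann function). -/
lemma normSq_sub_div_im_le_exp_dist_mul (p q : ℝ) (z w : ℍ) :
    Complex.normSq (p * w - q) / w.im ≤ exp (dist z w) * (Complex.normSq (p * z - q) / z.im) := by
  rcases eq_or_ne (p ^ 2 + q ^ 2) 0 with hpq | hpq
  · obtain ⟨rfl, rfl⟩ : p = 0 ∧ q = 0 := by
      constructor <;> nlinarith [sq_nonneg p, sq_nonneg q]
    simp
  let h : SL(2, ℝ) := ⟨!![-q / (p ^ 2 + q ^ 2), -p / (p ^ 2 + q ^ 2); p, -q], by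
    simp only [det_fin_two_of]; field_simp; ring⟩
  have him : ∀ v : ℍ, (h • v).im = v.im / Complex.normSq (p * v - q) := fun v => by
    rw [im_specialLinearGroup_smul]
    simp [h, sub_eq_add_neg]
  have hpos : ∀ v : ℍ, 0 < Complex.normSq (p * v - q) := fun v => by
    have := (h • v).im_pos
    rw [him] at this
    exact (div_pos_iff_of_pos_left v.im_pos).1 this
  have key := im_le_im_mul_exp_dist (h • z) (h • w)
  rw [dist_smul, him, him] at key
  have := z.im_pos
  have := w.im_pos
  have := hpos z
  have := hpos w
  rw [div_le_iff₀ w.im_pos]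
  field_simp at key ⊢
  linarith

lemma norm_mul_div_im_le_exp_dist_mul (p₁ q₁ p₂ q₂ : ℝ) (z w : ℍ) :
    ‖(p₁ * (w : ℂ) - q₁) * (p₂ * w - q₂)‖ / w.im
      ≤ exp (dist z w) * (‖(p₁ * (z : ℂ) - q₁) * (p₂ * z - q₂)‖ / z.im) := by
  have hsq : ∀ v : ℍ, (‖(p₁ * (v : ℂ) - q₁) * (p₂ * v - q₂)‖ / v.im) ^ 2 =
      Complex.normSq (p₁ * v - q₁) / v.im * (Complex.normSq (p₂ * v - q₂) / v.im) := fun v => by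
    rw [div_pow, norm_mul, mul_pow, Complex.sq_norm, Complex.sq_norm]
    ring
  have := z.im_pos
  have := w.im_pos
  rw [← pow_le_pow_iff_left₀ (by positivity) (by positivity) two_ne_zero, mul_pow, hsq, hsq]
  calc _ ≤ exp (dist z w) * (Complex.normSq (p₁ * z - q₁) / z.im)
        * (exp (dist z w) * (Complex.normSq (p₂ * z - q₂) / z.im)) :=
        mul_le_mul (normSq_sub_div_im_le_exp_dist_mul _ _ z w)
          (normSq_sub_div_im_le_exp_dist_mul _ _ z w)
          (div_nonneg (Complex.normSq_nonneg _) w.im_pos.le)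
          (mul_nonneg (exp_pos _).le (div_nonneg (Complex.normSq_nonneg _) z.im_pos.le))
    _ = _ := by ring

lemma sinh_half_dist_smul_self_le (g : SL(2, ℝ))
    (hg : 2 ≤ |trace (g : Matrix (Fin 2) (Fin 2) ℝ)|) (z w : ℍ) :
    sinh (dist w (g • w) / 2) ≤ exp (dist z w) * sinh (dist z (g • z) / 2) := by
  have hdisc : 0 ≤ discrim (g 1 0) (g 1 1 - g 0 0) (-g 0 1) := by
    rw [g.discrim_eq_trace_sq_sub_four, sub_nonneg, ← sq_abs]
    nlinarith
  obtain ⟨p₁, q₁, p₂, q₂, hfactor⟩ := exists_real_linear_factors hdisc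
  have hv : ∀ v : ℍ, (g 1 0 * (v : ℂ) ^ 2 + (g 1 1 - g 0 0) * v - g 0 1) =
      (p₁ * (v : ℂ) - q₁) * (p₂ * v - q₂) := fun v => by
    rw [← hfactor]
    push_cast
    ring
  rw [sinh_half_dist_smul_self, sinh_half_dist_smul_self, hv, hv, mul_div_assoc']
  exact div_le_div_of_nonneg_right (norm_mul_div_im_le_exp_dist_mul p₁ q₁ p₂ q₂ z w) zero_le_two

lemma dist_smul_self_le_exp_dist_mul (g : SL(2, ℝ))
    (hg : 2 ≤ |trace (g : Matrix (Fin 2) (Fin 2) ℝ)|) (z w : ℍ) :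
    dist w (g • w) ≤ exp (dist z w) * dist z (g • z) := by
  have h := (sinh_half_dist_smul_self_le g hg z w).trans
    (mul_sinh_le_sinh_mul (one_le_exp dist_nonneg) (div_nonneg dist_nonneg zero_le_two))
  rw [sinh_le_sinh, mul_div_assoc'] at h
  linarith

end UpperHalfPlane

/-- For every `D > 0` there exists `C ≥ 1` such that for every non-elliptic
`A ∈ SL(2,ℝ)` (i.e. `|tr A| ≥ 2`) and all `z, w ∈ ℍ` with `d_ℍ(z,w) ≤ D`, we have
`d_ℍ(w, A·w) ≤ C · d_ℍ(z, A·z)`. -/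
theorem stmt0 (D : ℝ) (hD : 0 < D) :
    ∃ C : ℝ, 1 ≤ C ∧
      ∀ A : SL(2, ℝ), 2 ≤ |Matrix.trace (A : Matrix (Fin 2) (Fin 2) ℝ)| →
        ∀ z w : ℍ, dist z w ≤ D →
          dist w (A • w) ≤ C * dist z (A • z) := by
  refine ⟨exp D, one_le_exp hD.le, fun A hA z w hzw => ?_⟩
  calc dist w (A • w) ≤ exp (dist z w) * dist z (A • z) := dist_smul_self_le_exp_dist_mul A hA z w
    _ ≤ exp D * dist z (A • z) := by gcongr
end

section
/- Let r₀ > 1 and let A(r₀) = {z ∈ ℂ : r₀⁻¹ < |z| < r₀}. Let f : A(r₀) → ℂ be holomorphic on A(r₀) and integrable on A(r₀) with respect to planar Lebesgue measure. Then ∫_{A(r₀)} (z²/|z|²)·f(z) dA(z) = 2·(log r₀) · ∫₀^{2π} e^{2iθ}·f(e^{iθ}) dθ. -/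
/-!
In polar coordinates `z = r e^{iθ}` the weight `z²/|z|²` becomes `e^{2iθ}` and the area
element `r dr dθ`, so the integral is `∫ r (∫ e^{2iθ} f(r e^{iθ}) dθ) dr`. The inner integral
is `(i r²)⁻¹ ∮_{|z| = r} z f(z) dz`, and by Cauchy's theorem on the annulus this circle integral
does not depend on `r`. What is left is `∫_{1/r₀}^{r₀} dr / r = 2 log r₀`.
-/

open MeasureTheory Real Complex

open Set Metric

def annulus (a b : ℝ) : Set ℂ := {z | a < ‖z‖ ∧ ‖z‖ < b}

@[simp]
theorem mem_annulus {a b : ℝ} {z : ℂ} : z ∈ annulus a b ↔ a < ‖z‖ ∧ ‖z‖ < b := Iff.rfl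

theorem isOpen_annulus (a b : ℝ) : IsOpen (annulus a b) :=
  isOpen_Ioo.preimage continuous_norm

theorem Complex.polarCoord_symm_eq_circleMap (p : ℝ × ℝ) :
    Complex.polarCoord.symm p = circleMap 0 p.1 p.2 := by
  rw [Complex.polarCoord_symm_apply, circleMap_zero, Complex.exp_mul_I]
  push_cast
  ring

section Polar

variable {E : Type*} [NormedAddCommGroup E] [NormedSpace ℝ E]

theorem integrableOn_polarCoord_target {g : ℂ → E} (hg : Integrable g) :
    IntegrableOn (fun p : ℝ × ℝ => p.1 • g (Complex.polarCoord.symm p)) polarCoord.target := by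
  have hg' : IntegrableOn (g ∘ measurableEquivRealProd.symm)
      (polarCoord.symm '' polarCoord.target) :=
    ((Complex.volume_preserving_equiv_real_prod.symm.integrable_comp_emb
      measurableEquivRealProd.symm.measurableEmbedding).mpr hg).integrableOn
  refine ((integrableOn_image_iff_integrableOn_abs_det_fderiv_smul volume
      polarCoord.open_target.measurableSet
      (fun p _ => (hasFDerivAt_polarCoord_symm p).hasFDerivWithinAt)
      polarCoord.symm.injOn _).mp hg').congr_fun (fun p hp => ?_)
      polarCoord.open_target.measurableSet
  have hr : 0 < p.1 := hp.1
  simp only [det_fderivPolarCoordSymm, abs_of_pos hr]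
  rfl

theorem integral_eq_integral_Ioi_smul_circleMap {g : ℂ → E} (hg : Integrable g) :
    ∫ z, g z = ∫ r in Ioi 0, r • ∫ θ in 0..2 * π, g (circleMap 0 r θ) := by
  have hint := integrableOn_polarCoord_target hg
  rw [polarCoord_target, Measure.volume_eq_prod] at hint
  rw [← Complex.integral_comp_polarCoord_symm, polarCoord_target, Measure.volume_eq_prod,
    setIntegral_prod _ hint]
  refine setIntegral_congr_fun measurableSet_Ioi fun r _ => ?_
  have hperiod := ((periodic_circleMap 0 r).comp g).intervalIntegral_add_eq (-π) 0
  rw [show -π + 2 * π = π by ring, zero_add] at hperiod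
  simp only [Complex.polarCoord_symm_eq_circleMap]
  rw [MeasureTheory.integral_smul, ← integral_Ioc_eq_integral_Ioo,
    ← intervalIntegral.integral_of_le (by linarith [pi_pos])]
  exact congrArg (r • ·) hperiod

theorem setIntegral_annulus_eq_integral_Ioo_smul_circleMap {g : ℂ → E} {a b : ℝ}
    (ha : 0 ≤ a) (hg : IntegrableOn g (annulus a b)) :
    ∫ z in annulus a b, g z = ∫ r in Ioo a b, r • ∫ θ in 0..2 * π, g (circleMap 0 r θ) := by
  have hA := (isOpen_annulus a b).measurableSet
  have hIoo : Ioi 0 ∩ Ioo a b = Ioo a b := by rw [Ioi_inter_Ioo, max_eq_right ha]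
  rw [← integral_indicator hA, integral_eq_integral_Ioi_smul_circleMap
    ((integrable_indicator_iff hA).2 hg), ← hIoo,
    ← setIntegral_indicator measurableSet_Ioo]
  refine setIntegral_congr_fun measurableSet_Ioi fun r (hr : 0 < r) => ?_
  have hmem : ∀ θ, circleMap 0 r θ ∈ annulus a b ↔ r ∈ Ioo a b := fun θ => by
    rw [mem_annulus, norm_circleMap_zero, abs_of_pos hr, mem_Ioo]
  by_cases hrab : r ∈ Ioo a b
  · simp only [indicator_of_mem hrab, indicator_of_mem ((hmem _).2 hrab)]
  · simp only [indicator_of_notMem hrab, indicator_of_notMem (mt (hmem _).1 hrab),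
      intervalIntegral.integral_zero, smul_zero]

end Polar

theorem circleIntegral_eq_of_differentiableOn_annulus {E : Type*} [NormedAddCommGroup E]
    [NormedSpace ℂ E] [CompleteSpace E] {g : ℂ → E} {a b r s : ℝ} (ha : 0 ≤ a)
    (hg : DifferentiableOn ℂ g (annulus a b)) (hr : r ∈ Ioo a b) (hs : s ∈ Ioo a b) :
    (∮ z in C(0, r), g z) = ∮ z in C(0, s), g z := by
  wlog hrs : r ≤ s generalizing r s
  · exact (this hs hr (le_of_not_ge hrs)).symm
  have hsub : closedBall (0 : ℂ) s \ ball 0 r ⊆ annulus a b := fun z ⟨hzs, hzr⟩ => by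
    rw [mem_closedBall_zero_iff] at hzs
    rw [mem_ball_zero_iff, not_lt] at hzr
    exact ⟨hr.1.trans_le hzr, hzs.trans_lt hs.2⟩
  refine (circleIntegral_eq_of_differentiable_on_annulus_off_countable (ha.trans_lt hr.1) hrs
    countable_empty (hg.continuousOn.mono hsub) fun z ⟨hz, _⟩ => ?_).symm
  exact hg.differentiableAt ((isOpen_annulus a b).mem_nhds
    (hsub ⟨ball_subset_closedBall hz.1, fun h => hz.2 (ball_subset_closedBall h)⟩))

theorem circleIntegral_id_mul (f : ℂ → ℂ) (r : ℝ) :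
    (∮ z in C(0, r), z * f z) =
      I * ∫ θ in 0..2 * π, circleMap 0 r θ ^ 2 * f (circleMap 0 r θ) := by
  rw [circleIntegral, ← intervalIntegral.integral_const_mul]
  refine intervalIntegral.integral_congr fun θ _ => ?_
  simp only [deriv_circleMap, smul_eq_mul]
  ring

theorem integral_circleMap_sq_mul_eq_of_differentiableOn_annulus {f : ℂ → ℂ} {a b r s : ℝ}
    (ha : 0 ≤ a) (hf : DifferentiableOn ℂ f (annulus a b)) (hr : r ∈ Ioo a b)
    (hs : s ∈ Ioo a b) :
    ∫ θ in 0..2 * π, circleMap 0 r θ ^ 2 * f (circleMap 0 r θ) =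
      ∫ θ in 0..2 * π, circleMap 0 s θ ^ 2 * f (circleMap 0 s θ) := by
  refine mul_left_cancel₀ I_ne_zero ?_
  rw [← circleIntegral_id_mul, ← circleIntegral_id_mul]
  exact circleIntegral_eq_of_differentiableOn_annulus ha (differentiableOn_id.mul hf) hr hs

theorem integral_Ioo_inv_inv_self {a : ℝ} (ha : 1 ≤ a) :
    ∫ r in Ioo a⁻¹ a, r⁻¹ = 2 * Real.log a := by
  have ha0 : 0 < a := zero_lt_one.trans_le ha
  rw [← integral_Ioc_eq_integral_Ioo,
    ← intervalIntegral.integral_of_le ((inv_le_one_of_one_le₀ ha).trans ha),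
    integral_inv_of_pos (inv_pos.2 ha0) ha0, div_inv_eq_mul, Real.log_mul ha0.ne' ha0.ne']
  ring

theorem integrableOn_sq_div_norm_sq_mul {f : ℂ → ℂ} {s : Set ℂ} (hf : IntegrableOn f s) :
    IntegrableOn (fun z => z ^ 2 / (‖z‖ : ℂ) ^ 2 * f z) s := by
  refine Integrable.bdd_mul (c := 1) hf (Measurable.aestronglyMeasurable (by fun_prop))
    (ae_of_all _ fun z => ?_)
  rw [norm_div, norm_pow, norm_pow, norm_real, norm_norm]
  exact div_self_le_one _

theorem smul_integral_circleMap_sq_div_norm_sq_mul (f : ℂ → ℂ) (r : ℝ) :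
    r • ∫ θ in 0..2 * π,
        circleMap 0 r θ ^ 2 / (‖circleMap 0 r θ‖ : ℂ) ^ 2 * f (circleMap 0 r θ) =
      r⁻¹ • ∫ θ in 0..2 * π, circleMap 0 r θ ^ 2 * f (circleMap 0 r θ) := by
  simp only [norm_circleMap_zero, div_eq_inv_mul, mul_assoc, intervalIntegral.integral_const_mul]
  rcases eq_or_ne r 0 with rfl | hr
  · simp
  rw [real_smul, real_smul, ← mul_assoc, ofReal_inv]
  congr 1
  rw [← ofReal_pow, sq_abs]
  push_cast
  field_simp

/-- For a holomorphic, Lebesgue-integrable function `f` on the annulus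
`A(r₀) = {r₀⁻¹ < |z| < r₀}`, the pairing of `z²/|z|²` against `f` equals
`2 log r₀` times the circle average `∫₀^{2π} e^{2iθ} f(e^{iθ}) dθ`. -/
theorem stmt5 (r₀ : ℝ) (hr₀ : 1 < r₀)
    (f : ℂ → ℂ)
    (hdiff : DifferentiableOn ℂ f {z : ℂ | r₀⁻¹ < ‖z‖ ∧ ‖z‖ < r₀})
    (hint : IntegrableOn f {z : ℂ | r₀⁻¹ < ‖z‖ ∧ ‖z‖ < r₀} volume) :
    ∫ z in {z : ℂ | r₀⁻¹ < ‖z‖ ∧ ‖z‖ < r₀},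
        (z ^ 2 / ((‖z‖ : ℂ) ^ 2)) * f z ∂volume
      = (2 * Real.log r₀ : ℝ) *
        ∫ θ in (0 : ℝ)..(2 * π),
          Complex.exp (2 * θ * Complex.I) * f (Complex.exp (θ * Complex.I)) := by
  have hr₀inv : 0 ≤ r₀⁻¹ := inv_nonneg.2 (zero_le_one.trans hr₀.le)
  have h1 : (1 : ℝ) ∈ Ioo r₀⁻¹ r₀ := ⟨inv_lt_one_of_one_lt₀ hr₀, hr₀⟩
  set c := ∫ θ in 0..2 * π, circleMap 0 1 θ ^ 2 * f (circleMap 0 1 θ)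
  have hc : c = ∫ θ in 0..2 * π, exp (2 * θ * I) * f (exp (θ * I)) := by
    refine intervalIntegral.integral_congr fun θ _ => ?_
    simp only [circleMap_zero, ofReal_one, one_mul, ← Complex.exp_nat_mul]
    push_cast
    ring_nf
  have hradial : ∀ r ∈ Ioo r₀⁻¹ r₀, r • ∫ θ in 0..2 * π,
      circleMap 0 r θ ^ 2 / (‖circleMap 0 r θ‖ : ℂ) ^ 2 * f (circleMap 0 r θ) = r⁻¹ • c :=
    fun r hr => by
      rw [smul_integral_circleMap_sq_div_norm_sq_mul,
        integral_circleMap_sq_mul_eq_of_differentiableOn_annulus hr₀inv hdiff hr h1]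
  calc ∫ z in annulus r₀⁻¹ r₀, z ^ 2 / (‖z‖ : ℂ) ^ 2 * f z
      = ∫ r in Ioo r₀⁻¹ r₀, r • ∫ θ in 0..2 * π,
          circleMap 0 r θ ^ 2 / (‖circleMap 0 r θ‖ : ℂ) ^ 2 * f (circleMap 0 r θ) :=
        setIntegral_annulus_eq_integral_Ioo_smul_circleMap hr₀inv
          (integrableOn_sq_div_norm_sq_mul hint)
    _ = ∫ r in Ioo r₀⁻¹ r₀, r⁻¹ • c := setIntegral_congr_fun measurableSet_Ioo hradial
    _ = (∫ r in Ioo r₀⁻¹ r₀, r⁻¹) • c := integral_smul_const _ _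
    _ = _ := by rw [integral_Ioo_inv_inv_self hr₀.le, hc, real_smul]
end

section
/- Let U ⊆ ℂ be a nonempty connected open set, and let φ, ψ : U → ℂ be holomorphic and integrable on U with respect to planar Lebesgue measure. Define h : U → ℂ by h(z) = |φ(z)|·ψ(z)/φ(z) when φ(z) ≠ 0 and h(z) = 0 when φ(z) = 0. Suppose ∫_U |φ| dA = 1, ∫_U |ψ| dA ≤ 1, and ∫_U h dA = 1. Then ψ(z) = φ(z) for every z ∈ U. -/
/-!
Pointwise `Re h ≤ |h| ≤ |ψ|`, while the hypotheses give `∫ |ψ| ≤ 1 = Re ∫ h`. Hence `h = |ψ|`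
almost everywhere, i.e. `|φ| ψ = |ψ| φ`, and by continuity this holds everywhere on `U`. Near a
point where `φ ≠ 0` the holomorphic quotient `ψ / φ` is then real-valued, hence constant by the
open mapping theorem; the identity theorem propagates `ψ = w φ` to all of `U`, and then the
pairing evaluates to `w`, so `w = 1`.
-/

open MeasureTheory Complex Filter Set Topology
open scoped ComplexOrder

namespace Complex

theorem norm_ofReal_norm_mul_div_le (a b : ℂ) : ‖(‖a‖ : ℂ) * b / a‖ ≤ ‖b‖ := by
  rcases eq_or_ne a 0 with rfl | ha
  · simp
  · rw [norm_div, norm_mul, norm_real, norm_norm, mul_div_right_comm,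
      div_self (norm_ne_zero_iff.2 ha), one_mul]

theorem ofReal_norm_mul_eq_of_ofReal_norm_mul_div_eq {a b : ℂ} (h : (‖a‖ : ℂ) * b / a = ‖b‖) :
    (‖a‖ : ℂ) * b = ‖b‖ * a := by
  rcases eq_or_ne a 0 with rfl | ha
  · simp_all
  · rwa [div_eq_iff ha] at h

theorem ofReal_norm_mul_const_mul_div (a w : ℂ) : (‖a‖ : ℂ) * (w * a) / a = w * ‖a‖ := by
  rcases eq_or_ne a 0 with rfl | ha
  · simp
  · field_simp

end Complex

theorem MeasureTheory.Integrable.ofReal_norm_mul_div {α : Type*} [MeasurableSpace α]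
    {μ : Measure α} {f g : α → ℂ} (hf : AEStronglyMeasurable f μ) (hg : Integrable g μ) :
    Integrable (fun x => (‖f x‖ : ℂ) * g x / f x) μ := by
  have hf' := hf.aemeasurable
  have hg' := hg.aemeasurable
  exact hg.mono (by fun_prop : AEMeasurable _ μ).aestronglyMeasurable
    (ae_of_all _ fun x => norm_ofReal_norm_mul_div_le _ _)

/-- Equality case of `Re ∫ f ≤ ∫ ‖f‖ ≤ ∫ ‖g‖`. -/
theorem MeasureTheory.ae_eq_ofReal_norm_of_integral_norm_le_re_integral {α : Type*}
    [MeasurableSpace α] {μ : Measure α} {f g : α → ℂ} (hf : Integrable f μ) (hg : Integrable g μ)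
    (hfg : ∀ᵐ x ∂μ, ‖f x‖ ≤ ‖g x‖) (hle : ∫ x, ‖g x‖ ∂μ ≤ (∫ x, f x ∂μ).re) :
    f =ᵐ[μ] fun x => (‖g x‖ : ℂ) := by
  have hdefect_nonneg : 0 ≤ᵐ[μ] fun x => ‖g x‖ - (f x).re :=
    hfg.mono fun x hx => sub_nonneg.2 ((re_le_norm _).trans hx)
  have hf_re : Integrable (fun x => (f x).re) μ := hf.re
  have hdefect_int : Integrable (fun x => ‖g x‖ - (f x).re) μ := hg.norm.sub hf_re
  have hdefect_zero : ∫ x, (‖g x‖ - (f x).re) ∂μ = 0 := by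
    refine le_antisymm ?_ (integral_nonneg_of_ae hdefect_nonneg)
    have hintegral_re : ∫ x, (f x).re ∂μ = (∫ x, f x ∂μ).re := integral_re hf
    rw [integral_sub hg.norm hf_re, hintegral_re]
    exact sub_nonpos.2 hle
  filter_upwards [(integral_eq_zero_iff_of_nonneg_ae hdefect_nonneg hdefect_int).1 hdefect_zero,
    hfg] with x hx hfgx
  have hre : (f x).re = ‖g x‖ := (sub_eq_zero.1 hx).symm
  have hnonneg : 0 ≤ f x := re_eq_norm.1 (le_antisymm (re_le_norm _) (hre ▸ hfgx))
  rw [eq_re_of_ofReal_le hnonneg, hre]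

namespace Complex

variable {U : Set ℂ} {φ ψ : ℂ → ℂ}

/-- Where `φ ≠ 0`, the relation `‖φ‖ ψ = ‖ψ‖ φ` says that `ψ / φ` is real, so it is locally
constant by the open mapping theorem. -/
theorem exists_eventuallyEq_const_mul_of_ofReal_norm_mul_eq (hU : IsOpen U)
    (hφ : DifferentiableOn ℂ φ U) (hψ : DifferentiableOn ℂ ψ U)
    (heq : EqOn (fun z => (‖φ z‖ : ℂ) * ψ z) (fun z => (‖ψ z‖ : ℂ) * φ z) U)
    {z₀ : ℂ} (hz₀ : z₀ ∈ U) (hφz₀ : φ z₀ ≠ 0) :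
    ∃ w : ℂ, ψ =ᶠ[𝓝 z₀] fun z => w * φ z := by
  have hV : IsOpen (U ∩ φ ⁻¹' {0}ᶜ) :=
    hφ.continuousOn.isOpen_inter_preimage hU isOpen_compl_singleton
  obtain ⟨r, hr, hball⟩ := Metric.isOpen_iff.1 hV z₀ ⟨hz₀, hφz₀⟩
  have hBU : Metric.ball z₀ r ⊆ U := fun z hz => (hball hz).1
  have hBφ : ∀ z ∈ Metric.ball z₀ r, φ z ≠ 0 := fun z hz => (hball hz).2
  have hq : AnalyticOnNhd ℂ (fun z => ψ z / φ z) (Metric.ball z₀ r) :=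
    ((hψ.mono hBU).div (hφ.mono hBU) hBφ).analyticOnNhd Metric.isOpen_ball
  have hq_real : ∀ z ∈ Metric.ball z₀ r, (ψ z / φ z).im = 0 := by
    intro z hz
    have hφz : (‖φ z‖ : ℂ) ≠ 0 := ofReal_ne_zero.2 (norm_ne_zero_iff.2 (hBφ z hz))
    have hq_eq : ψ z / φ z = ((‖ψ z‖ / ‖φ z‖ : ℝ) : ℂ) := by
      rw [ofReal_div, div_eq_div_iff (hBφ z hz) hφz]
      linear_combination heq (hBU hz)
    rw [hq_eq, ofReal_im]
  obtain ⟨w, hw⟩ :=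
    hq.eq_const_of_im_eq_const hq_real Metric.isOpen_ball (Metric.isConnected_ball hr)
  refine ⟨w, eventually_of_mem (Metric.ball_mem_nhds z₀ hr) fun z hz => ?_⟩
  rw [← hw z hz]
  exact (div_mul_cancel₀ _ (hBφ z hz)).symm

theorem exists_eqOn_const_mul_of_ofReal_norm_mul_eq (hU : IsOpen U) (hUc : IsConnected U)
    (hφ : DifferentiableOn ℂ φ U) (hψ : DifferentiableOn ℂ ψ U)
    (heq : EqOn (fun z => (‖φ z‖ : ℂ) * ψ z) (fun z => (‖ψ z‖ : ℂ) * φ z) U)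
    (hφne : ∃ z ∈ U, φ z ≠ 0) :
    ∃ w : ℂ, EqOn ψ (fun z => w * φ z) U := by
  obtain ⟨z₀, hz₀, hφz₀⟩ := hφne
  obtain ⟨w, hw⟩ := exists_eventuallyEq_const_mul_of_ofReal_norm_mul_eq hU hφ hψ heq hz₀ hφz₀
  exact ⟨w, (hψ.analyticOnNhd hU).eqOn_of_preconnected_of_eventuallyEq
    ((hφ.const_mul w).analyticOnNhd hU) hUc.isPreconnected hz₀ hw⟩

end Complex

theorem stmt8_general (U : Set ℂ) (hUopen : IsOpen U)
    (hUconn : IsConnected U)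
    (φ ψ : ℂ → ℂ)
    (hφdiff : DifferentiableOn ℂ φ U) (hψdiff : DifferentiableOn ℂ ψ U)
    (hψint : IntegrableOn ψ U volume)
    (h : ℂ → ℂ)
    (hdef : ∀ z, h z = if φ z = 0 then 0 else ((‖φ z‖ : ℝ) : ℂ) * ψ z / φ z)
    (hφnorm : ∫ z in U, ‖φ z‖ ∂volume = 1)
    (hψnorm : ∫ z in U, ‖ψ z‖ ∂volume ≤ 1)
    (hpair : ∫ z in U, h z ∂volume = 1) :
    ∀ z ∈ U, ψ z = φ z := by
  have hh : h = fun z => (‖φ z‖ : ℂ) * ψ z / φ z := funext fun z => by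
    rw [hdef]; split_ifs with hz <;> simp [hz]
  subst hh
  have hφc := hφdiff.continuousOn
  have hψc := hψdiff.continuousOn
  have hhint : IntegrableOn (fun z => (‖φ z‖ : ℂ) * ψ z / φ z) U :=
    hψint.ofReal_norm_mul_div (hφc.aestronglyMeasurable hUopen.measurableSet)
  have hae := ae_eq_ofReal_norm_of_integral_norm_le_re_integral hhint hψint
    (ae_of_all _ fun z => norm_ofReal_norm_mul_div_le _ _) (by simpa [hpair])
  have heq : EqOn (fun z => (‖φ z‖ : ℂ) * ψ z) (fun z => (‖ψ z‖ : ℂ) * φ z) U :=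
    Measure.eqOn_of_ae_eq (hae.mono fun z => ofReal_norm_mul_eq_of_ofReal_norm_mul_div_eq)
      (by fun_prop) (by fun_prop) (hUopen.interior_eq.symm ▸ subset_closure)
  have hφne : ∃ z ∈ U, φ z ≠ 0 := by
    simpa using exists_ne_zero_of_setIntegral_ne_zero (f := fun z => ‖φ z‖) (hφnorm ▸ one_ne_zero)
  obtain ⟨w, hw⟩ := exists_eqOn_const_mul_of_ofReal_norm_mul_eq hUopen hUconn hφdiff hψdiff heq hφne
  have hpair_eq : ∫ z in U, (‖φ z‖ : ℂ) * ψ z / φ z = w := by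
    rw [setIntegral_congr_fun hUopen.measurableSet fun z hz => by
        rw [hw hz, ofReal_norm_mul_const_mul_div],
      integral_const_mul, integral_complex_ofReal, hφnorm, ofReal_one, mul_one]
  intro z hz
  rw [hw hz, ← hpair_eq, hpair]
  exact one_mul _

/-- Extremal uniqueness: if `φ, ψ` are holomorphic and integrable on a nonempty
connected open set `U ⊆ ℂ`, `∫_U |φ| = 1`, `∫_U |ψ| ≤ 1`, and the pairing
`∫_U (|φ|/φ)·ψ` equals `1` (where the integrand is taken to be `0` at zeros of `φ`),
then `ψ = φ` on `U`. -/
theorem stmt8 (U : Set ℂ) (hU : U.Nonempty) (hUopen : IsOpen U)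
    (hUconn : IsConnected U)
    (φ ψ : ℂ → ℂ)
    (hφdiff : DifferentiableOn ℂ φ U) (hψdiff : DifferentiableOn ℂ ψ U)
    (hφint : IntegrableOn φ U volume) (hψint : IntegrableOn ψ U volume)
    (h : ℂ → ℂ)
    (hdef : ∀ z, h z = if φ z = 0 then 0 else ((‖φ z‖ : ℝ) : ℂ) * ψ z / φ z)
    (hφnorm : ∫ z in U, ‖φ z‖ ∂volume = 1)
    (hψnorm : ∫ z in U, ‖ψ z‖ ∂volume ≤ 1)
    (hpair : ∫ z in U, h z ∂volume = 1) :
    ∀ z ∈ U, ψ z = φ z :=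
  stmt8_general U hUopen hUconn φ ψ hφdiff hψdiff hψint h hdef hφnorm hψnorm hpair
end

section
/- Fix δ₀ ∈ (0,1) and real numbers ζ, λ with −1+δ₀ ≤ ζ < λ ≤ 1−δ₀, and let r ≥ 0. Then the Schwarz–Christoffel integrand h_r(x) = √(x−ζ+r)/(√(x+1)·√(x−ζ)·√(x−λ)·√(x−1)) is integrable on (1, ∞), the total integral J(r) = ∫₁^∞ h_r(x) dx satisfies 0 < J(0), and J(0) ≤ J(r) ≤ (1 + r/(2δ₀))·J(0). -/
/-!
Near `x = 1` the integrand behaves like `(x - 1)^(-1/2)` and at infinity like `x^(-3/2)`, so it is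
integrable as soon as `ζ, λ < 1`. Writing `a = x - ζ ≥ δ₀` for `x > 1`, the numerator satisfies
`√a ≤ √(a + r) ≤ (1 + r / (2δ₀)) √a`, and integrating these pointwise bounds against the
remaining positive factor gives both estimates for `J(r)`.
-/

open MeasureTheory Real Set

lemma Real.sqrt_add_le_mul_sqrt {δ a r : ℝ} (hδ : 0 < δ) (ha : δ ≤ a) (hr : 0 ≤ r) :
    √(a + r) ≤ (1 + r / (2 * δ)) * √a := by
  have ha0 : 0 ≤ a := hδ.le.trans ha
  have ht : 0 ≤ r / (2 * δ) := by positivity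
  rw [sqrt_le_iff, mul_pow, sq_sqrt ha0]
  refine ⟨by positivity, ?_⟩
  calc a + r = a + 2 * (r / (2 * δ)) * δ := by field_simp
    _ ≤ (1 + r / (2 * δ)) ^ 2 * a := by
      nlinarith [mul_le_mul_of_nonneg_left ha ht, mul_nonneg (sq_nonneg (r / (2 * δ))) ha0]

lemma min_one_sub_mul_le_sub {a x : ℝ} (hx : 1 ≤ x) : min 1 (1 - a) * x ≤ x - a := by
  rcases le_total 1 (1 - a) with h | h
  · rw [min_eq_left h]; linarith
  · rw [min_eq_right h]; nlinarith

lemma integrableOn_Ioi_one_inv_mul_sqrt_sub_one :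
    IntegrableOn (fun x : ℝ => (x * √(x - 1))⁻¹) (Ioi 1) := by
  have hmeas : AEStronglyMeasurable (fun x : ℝ => (x * √(x - 1))⁻¹) :=
    (by fun_prop : Measurable fun x : ℝ => (x * √(x - 1))⁻¹).aestronglyMeasurable
  rw [← Ioc_union_Ioi_eq_Ioi one_le_two]
  refine IntegrableOn.union ?_ ?_
  · have hdom : IntegrableOn (fun x : ℝ => (x - 1) ^ (-(1 / 2) : ℝ)) (Ioc 1 2) := by
      have := (intervalIntegral.intervalIntegrable_rpow' (a := 0) (b := 1)
        (r := -(1 / 2)) (by norm_num)).comp_sub_right 1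
      norm_num at this
      exact (intervalIntegrable_iff_integrableOn_Ioc_of_le one_le_two).mp this
    refine hdom.mono' hmeas.restrict (ae_restrict_of_forall_mem measurableSet_Ioc fun x hx => ?_)
    have ht : 0 < x - 1 := sub_pos.mpr hx.1
    rw [norm_inv, norm_mul, norm_of_nonneg (by linarith [hx.1]), norm_of_nonneg (sqrt_nonneg _),
      rpow_neg ht.le, ← sqrt_eq_rpow]
    exact inv_anti₀ (sqrt_pos.mpr ht) (le_mul_of_one_le_left (sqrt_nonneg _) hx.1.le)
  · have hdom := integrableOn_add_rpow_Ioi_of_lt (a := -(3 / 2)) (m := -1) (c := 2)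
      (by norm_num) (by norm_num)
    refine hdom.mono' hmeas.restrict (ae_restrict_of_forall_mem measurableSet_Ioi fun x hx => ?_)
    have ht : 0 < x - 1 := by linarith [mem_Ioi.mp hx]
    rw [← sub_eq_add_neg, norm_inv, norm_mul, norm_of_nonneg (by linarith),
      norm_of_nonneg (sqrt_nonneg _), rpow_neg ht.le, show (3 / 2 : ℝ) = 1 + 1 / 2 by norm_num,
      rpow_add ht, rpow_one, ← sqrt_eq_rpow]
    exact inv_anti₀ (by positivity) (mul_le_mul_of_nonneg_right (by linarith) (sqrt_nonneg _))

lemma integrableOn_Ioi_one_inv_sqrt_add_one_mul_sqrt_sub_mul_sqrt_sub_one {lam : ℝ}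
    (hlam : lam < 1) :
    IntegrableOn (fun x : ℝ => (√(x + 1) * √(x - lam) * √(x - 1))⁻¹) (Ioi 1) := by
  set c := min 1 (1 - lam)
  have hc : 0 < c := lt_min one_pos (sub_pos.mpr hlam)
  refine (integrableOn_Ioi_one_inv_mul_sqrt_sub_one.const_mul (√c)⁻¹).mono'
    (by fun_prop : Measurable fun x : ℝ => (√(x + 1) * √(x - lam) * √(x - 1))⁻¹).aestronglyMeasurable
    (ae_restrict_of_forall_mem measurableSet_Ioi fun x hx => ?_)
  have hx : 1 < x := hx
  have hsqrt : √c * x ≤ √(x + 1) * √(x - lam) :=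
    calc √c * x = √x * √(c * x) := by
          rw [sqrt_mul hc.le, mul_left_comm, mul_self_sqrt (by linarith)]
      _ ≤ √(x + 1) * √(x - lam) := by
          gcongr
          · linarith
          · exact min_one_sub_mul_le_sub hx.le
  rw [norm_inv, norm_of_nonneg (by positivity), ← mul_inv, ← mul_assoc]
  exact inv_anti₀ (by have := sqrt_pos.mpr (sub_pos.mpr hx); positivity)
    (mul_le_mul_of_nonneg_right hsqrt (sqrt_nonneg _))

/-- `h_r(x)`, with `lam` for `λ`. -/
noncomputable def schwarzChristoffelIntegrand (ζ lam r x : ℝ) : ℝ :=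
  √(x - ζ + r) / (√(x + 1) * √(x - ζ) * √(x - lam) * √(x - 1))

section SchwarzChristoffel

variable {ζ lam : ℝ}

lemma schwarzChristoffelIntegrand_zero {x : ℝ} (hx : ζ < x) :
    schwarzChristoffelIntegrand ζ lam 0 x = (√(x + 1) * √(x - lam) * √(x - 1))⁻¹ := by
  have : √(x - ζ) ≠ 0 := (sqrt_pos.mpr (sub_pos.mpr hx)).ne'
  rw [schwarzChristoffelIntegrand, add_zero]
  field_simp

lemma schwarzChristoffelIntegrand_mono (x : ℝ) :
    Monotone fun r => schwarzChristoffelIntegrand ζ lam r x :=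
  fun _ _ h => div_le_div_of_nonneg_right (sqrt_le_sqrt (by linarith)) (by positivity)

lemma schwarzChristoffelIntegrand_le_mul {δ r x : ℝ} (hδ : 0 < δ) (hx : δ ≤ x - ζ) (hr : 0 ≤ r) :
    schwarzChristoffelIntegrand ζ lam r x
      ≤ (1 + r / (2 * δ)) * schwarzChristoffelIntegrand ζ lam 0 x := by
  rw [schwarzChristoffelIntegrand, schwarzChristoffelIntegrand, add_zero, ← mul_div_assoc]
  exact div_le_div_of_nonneg_right (sqrt_add_le_mul_sqrt hδ hx hr) (by positivity)

lemma integrableOn_schwarzChristoffelIntegrand_zero (hζ : ζ ≤ 1) (hlam : lam < 1) :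
    IntegrableOn (schwarzChristoffelIntegrand ζ lam 0) (Ioi 1) :=
  (integrableOn_Ioi_one_inv_sqrt_add_one_mul_sqrt_sub_mul_sqrt_sub_one hlam).congr_fun
    (fun _ hx => (schwarzChristoffelIntegrand_zero (hζ.trans_lt hx)).symm) measurableSet_Ioi

lemma integrableOn_schwarzChristoffelIntegrand {r : ℝ} (hζ : ζ < 1) (hlam : lam < 1)
    (hr : 0 ≤ r) : IntegrableOn (schwarzChristoffelIntegrand ζ lam r) (Ioi 1) :=
  ((integrableOn_schwarzChristoffelIntegrand_zero hζ.le hlam).const_mul _).mono'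
    (by unfold schwarzChristoffelIntegrand; fun_prop : Measurable _).aestronglyMeasurable
    (ae_restrict_of_forall_mem measurableSet_Ioi fun _ hx => by
      rw [norm_of_nonneg (by unfold schwarzChristoffelIntegrand; positivity)]
      exact schwarzChristoffelIntegrand_le_mul (sub_pos.mpr hζ) (by linarith [mem_Ioi.mp hx]) hr)

lemma setIntegral_schwarzChristoffelIntegrand_zero_pos (hζ : ζ ≤ 1) (hlam : lam < 1) :
    0 < ∫ x in Ioi 1, schwarzChristoffelIntegrand ζ lam 0 x := by
  have hpos : ∀ x ∈ Ioi (1 : ℝ), 0 < schwarzChristoffelIntegrand ζ lam 0 x := fun x hx => by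
    have hx : 1 < x := hx
    rw [schwarzChristoffelIntegrand_zero (hζ.trans_lt hx)]
    have := sqrt_pos.mpr (sub_pos.mpr (hlam.trans hx))
    have := sqrt_pos.mpr (sub_pos.mpr hx)
    positivity
  rw [setIntegral_pos_iff_support_of_nonneg_ae
    (ae_restrict_of_forall_mem measurableSet_Ioi fun x hx => (hpos x hx).le)
    (integrableOn_schwarzChristoffelIntegrand_zero hζ hlam)]
  calc (0 : ENNReal) < volume (Ioi (1 : ℝ)) := by simp
    _ ≤ volume (Function.support (schwarzChristoffelIntegrand ζ lam 0) ∩ Ioi 1) :=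
      measure_mono fun x hx => ⟨(hpos x hx).ne', hx⟩

end SchwarzChristoffel

theorem stmt10_general (δ₀ ζ lam r : ℝ) (hδ₀ : 0 < δ₀)
    (hζlam : ζ < lam) (hlam : lam ≤ 1 - δ₀) (hr : 0 ≤ r) :
    IntegrableOn (fun x : ℝ => Real.sqrt (x - ζ + r) /
        (Real.sqrt (x + 1) * Real.sqrt (x - ζ) * Real.sqrt (x - lam) *
          Real.sqrt (x - 1))) (Ioi 1) volume ∧
    0 < (∫ x in Ioi (1 : ℝ), Real.sqrt (x - ζ + 0) /
        (Real.sqrt (x + 1) * Real.sqrt (x - ζ) * Real.sqrt (x - lam) *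
          Real.sqrt (x - 1))) ∧
    (∫ x in Ioi (1 : ℝ), Real.sqrt (x - ζ + 0) /
        (Real.sqrt (x + 1) * Real.sqrt (x - ζ) * Real.sqrt (x - lam) *
          Real.sqrt (x - 1)))
      ≤ (∫ x in Ioi (1 : ℝ), Real.sqrt (x - ζ + r) /
        (Real.sqrt (x + 1) * Real.sqrt (x - ζ) * Real.sqrt (x - lam) *
          Real.sqrt (x - 1))) ∧
    (∫ x in Ioi (1 : ℝ), Real.sqrt (x - ζ + r) /
        (Real.sqrt (x + 1) * Real.sqrt (x - ζ) * Real.sqrt (x - lam) *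
          Real.sqrt (x - 1)))
      ≤ (1 + r / (2 * δ₀)) *
        (∫ x in Ioi (1 : ℝ), Real.sqrt (x - ζ + 0) /
        (Real.sqrt (x + 1) * Real.sqrt (x - ζ) * Real.sqrt (x - lam) *
          Real.sqrt (x - 1))) := by
  have hlam1 : lam < 1 := by linarith
  have hζ1 : ζ < 1 := hζlam.trans hlam1
  have hint0 := integrableOn_schwarzChristoffelIntegrand_zero hζ1.le hlam1
  have hintr := integrableOn_schwarzChristoffelIntegrand hζ1 hlam1 hr
  refine ⟨hintr, setIntegral_schwarzChristoffelIntegrand_zero_pos hζ1.le hlam1,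
    setIntegral_mono hint0 hintr fun x => schwarzChristoffelIntegrand_mono x hr, ?_⟩
  rw [← integral_const_mul]
  refine setIntegral_mono_on hintr (hint0.const_mul _) measurableSet_Ioi fun x hx => ?_
  exact schwarzChristoffelIntegrand_le_mul hδ₀ (by linarith [mem_Ioi.mp hx]) hr

/-- Estimates for the Schwarz–Christoffel normalization constants: with
`h_r(x) = √(x−ζ+r)/(√(x+1)·√(x−ζ)·√(x−λ)·√(x−1))` for `x > 1` and
`J(r) = ∫₁^∞ h_r`, uniformly for `−1+δ₀ ≤ ζ < λ ≤ 1−δ₀`, the integrand is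
integrable, `0 < J(0)`, and `J(0) ≤ J(r) ≤ (1 + r/(2δ₀))·J(0)`. -/
theorem stmt10 (δ₀ ζ lam r : ℝ) (hδ₀ : 0 < δ₀) (hδ₁ : δ₀ < 1)
    (hζ : -1 + δ₀ ≤ ζ) (hζlam : ζ < lam) (hlam : lam ≤ 1 - δ₀) (hr : 0 ≤ r) :
    IntegrableOn (fun x : ℝ => Real.sqrt (x - ζ + r) /
        (Real.sqrt (x + 1) * Real.sqrt (x - ζ) * Real.sqrt (x - lam) *
          Real.sqrt (x - 1))) (Ioi 1) volume ∧
    0 < (∫ x in Ioi (1 : ℝ), Real.sqrt (x - ζ + 0) /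
        (Real.sqrt (x + 1) * Real.sqrt (x - ζ) * Real.sqrt (x - lam) *
          Real.sqrt (x - 1))) ∧
    (∫ x in Ioi (1 : ℝ), Real.sqrt (x - ζ + 0) /
        (Real.sqrt (x + 1) * Real.sqrt (x - ζ) * Real.sqrt (x - lam) *
          Real.sqrt (x - 1)))
      ≤ (∫ x in Ioi (1 : ℝ), Real.sqrt (x - ζ + r) /
        (Real.sqrt (x + 1) * Real.sqrt (x - ζ) * Real.sqrt (x - lam) *
          Real.sqrt (x - 1))) ∧
    (∫ x in Ioi (1 : ℝ), Real.sqrt (x - ζ + r) /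
        (Real.sqrt (x + 1) * Real.sqrt (x - ζ) * Real.sqrt (x - lam) *
          Real.sqrt (x - 1)))
      ≤ (1 + r / (2 * δ₀)) *
        (∫ x in Ioi (1 : ℝ), Real.sqrt (x - ζ + 0) /
        (Real.sqrt (x + 1) * Real.sqrt (x - ζ) * Real.sqrt (x - lam) *
          Real.sqrt (x - 1))) :=
  stmt10_general δ₀ ζ lam r hδ₀ hζlam hlam hr
end

section
/- Fix δ₀ ∈ (0,1) and real numbers ζ, λ with −1+δ₀ ≤ ζ < λ ≤ 1−δ₀, and let r ≥ 0. With h_r, J(r) as below and F(y, r) = ∫₁^y h_r(x) dx for y ≥ 1, one has | F(y, r)/J(r) − F(y, 0)/J(0) | ≤ r/(2δ₀) for every y ≥ 1. (In particular the normalized Schwarz–Christoffel boundary parametrizations at parameters r and 0 differ by at most r/(2δ₀), which is the estimate g_t(x) = x + O(r(t)) of the paper.) -/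
/-!
On `(1, ∞)` one has `x - ζ ≥ δ₀`, so `√(x - ζ + r) ≤ (1 + r / (2δ₀)) √(x - ζ)` and hence
`h₀ ≤ h_r ≤ (1 + c) h₀` with `c = r / (2δ₀)`. For any two nonnegative integrands comparable in
this way, the partial integral and the total integral each grow by a factor in `[1, 1 + c]`
when passing from `h₀` to `h_r`, and since the normalized partial integral of `h₀` lies in
`[0, 1]`, the two normalized partial integrals differ by at most `c`.
-/

open MeasureTheory Real Set

theorem abs_div_sub_div_le_of_le_one_add_mul {a b A B c : ℝ} (ha : 0 ≤ a) (hab : a ≤ b)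
    (hba : b ≤ (1 + c) * a) (hA : 0 < A) (hAB : A ≤ B) (hBA : B ≤ (1 + c) * A) (haA : a ≤ A) :
    |b / B - a / A| ≤ c := by
  have hB : 0 < B := hA.trans_le hAB
  rw [div_sub_div _ _ hB.ne' hA.ne', abs_div, abs_of_pos (mul_pos hB hA),
    div_le_iff₀ (mul_pos hB hA), abs_le]
  constructor <;> nlinarith [mul_le_mul_of_nonneg_right hab hA.le,
    mul_le_mul_of_nonneg_right hba hA.le, mul_le_mul_of_nonneg_right hAB ha,
    mul_le_mul_of_nonneg_right hBA ha,
    mul_le_mul_of_nonneg_right (haA.trans hAB) (sub_nonneg.2 hAB)]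

theorem abs_setIntegral_div_sub_setIntegral_div_le {α : Type*} [MeasurableSpace α]
    {μ : Measure α} {f g : α → ℝ} {s t : Set α} {c : ℝ} (hst : s ⊆ t)
    (hf : IntegrableOn f t μ) (hg : AEStronglyMeasurable g (μ.restrict t))
    (hf0 : ∀ᵐ x ∂μ.restrict t, 0 ≤ f x) (hfg : ∀ᵐ x ∂μ.restrict t, f x ≤ g x)
    (hgf : ∀ᵐ x ∂μ.restrict t, g x ≤ (1 + c) * f x) (hpos : 0 < ∫ x in t, f x ∂μ) :
    |(∫ x in s, g x ∂μ) / (∫ x in t, g x ∂μ) - (∫ x in s, f x ∂μ) / ∫ x in t, f x ∂μ|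
      ≤ c := by
  have hg_int : IntegrableOn g t μ := by
    refine (hf.const_mul (1 + c)).mono' hg ?_
    filter_upwards [hf0, hfg, hgf] with x h0 h1 h2
    rwa [Real.norm_of_nonneg (h0.trans h1)]
  have sub {p : α → Prop} (hp : ∀ᵐ x ∂μ.restrict t, p x) : ∀ᵐ x ∂μ.restrict s, p x :=
    ae_restrict_of_ae_restrict_of_subset hst hp
  refine abs_div_sub_div_le_of_le_one_add_mul ?_ ?_ ?_ hpos ?_ ?_ ?_
  · exact integral_nonneg_of_ae (sub hf0)
  · exact setIntegral_mono_ae_restrict (hf.mono_set hst) (hg_int.mono_set hst) (sub hfg)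
  · rw [← integral_const_mul]
    exact setIntegral_mono_ae_restrict (hg_int.mono_set hst)
      ((hf.mono_set hst).const_mul _) (sub hgf)
  · exact setIntegral_mono_ae_restrict hf hg_int hfg
  · rw [← integral_const_mul]
    exact setIntegral_mono_ae_restrict hg_int (hf.const_mul _) hgf
  · exact setIntegral_mono_set hf hf0 hst.eventuallyLE

theorem Real.sqrt_add_le_one_add_div_mul_sqrt {a d r : ℝ} (hd : 0 < d) (hda : d ≤ a)
    (hr : 0 ≤ r) : √(a + r) ≤ (1 + r / (2 * d)) * √a := by
  have hrd : r / (2 * d) * d = r / 2 := by field_simp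
  have hsq : a + r ≤ (1 + r / (2 * d)) ^ 2 * a := by
    nlinarith [mul_le_mul_of_nonneg_left hda (by positivity : 0 ≤ r / (2 * d)),
      mul_nonneg (sq_nonneg (r / (2 * d))) (hd.le.trans hda)]
  calc √(a + r) ≤ √((1 + r / (2 * d)) ^ 2 * a) := Real.sqrt_le_sqrt hsq
    _ = (1 + r / (2 * d)) * √a := by
      rw [Real.sqrt_mul (by positivity), Real.sqrt_sq (by positivity)]

theorem inv_sqrt_mul_le_of_one_lt {lam x : ℝ} (hlam : lam < 1) (hx : 1 < x) :
    (√(x + 1) * √(x - lam) * √(x - 1))⁻¹ ≤ (√(1 - lam))⁻¹ * (x - 1) ^ (-(1 / 2) : ℝ) := by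
  have hx1 : 0 < x - 1 := sub_pos.2 hx
  rw [Real.rpow_neg hx1.le, ← Real.sqrt_eq_rpow, ← mul_inv]
  have h1 : 1 ≤ √(x + 1) := Real.one_le_sqrt.2 (by linarith)
  have h2 : √(1 - lam) ≤ √(x - lam) := Real.sqrt_le_sqrt (by linarith)
  apply inv_anti₀ (mul_pos (Real.sqrt_pos.2 (by linarith)) (Real.sqrt_pos.2 hx1))
  calc √(1 - lam) * √(x - 1) = 1 * √(1 - lam) * √(x - 1) := by ring
    _ ≤ √(x + 1) * √(x - lam) * √(x - 1) := by gcongr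

theorem inv_sqrt_mul_le_of_two_le {lam x : ℝ} (hlam : lam ≤ 1) (hx : 2 ≤ x) :
    (√(x + 1) * √(x - lam) * √(x - 1))⁻¹ ≤ 2 * x ^ (-(3 / 2) : ℝ) := by
  have hx0 : 0 < x := by linarith
  have hx1 : 0 < x - 1 := by linarith
  have hpow : x ^ (-(3 / 2) : ℝ) = (x * √x)⁻¹ := by
    rw [Real.rpow_neg hx0.le, show (3 / 2 : ℝ) = 1 + 1 / 2 by norm_num, Real.rpow_add hx0,
      Real.rpow_one, ← Real.sqrt_eq_rpow]
  have hprod : x * √x ≤ 2 * (√(x + 1) * √(x - lam) * √(x - 1)) :=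
    calc x * √x ≤ 2 * (√(x - 1) * √(x - 1)) * √x := by
          rw [Real.mul_self_sqrt hx1.le]; nlinarith [Real.sqrt_nonneg x]
      _ = 2 * (√x * √(x - 1) * √(x - 1)) := by ring
      _ ≤ 2 * (√(x + 1) * √(x - lam) * √(x - 1)) := by gcongr; linarith
  rw [hpow, ← inv_inv (2 : ℝ), ← mul_inv]
  exact inv_anti₀ (by positivity) (by linarith)

theorem integrableOn_inv_sqrt_mul {lam : ℝ} (hlam : lam < 1) :
    IntegrableOn (fun x ↦ (√(x + 1) * √(x - lam) * √(x - 1))⁻¹) (Ioi 1) := by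
  have hmeas : AEStronglyMeasurable (fun x : ℝ ↦ (√(x + 1) * √(x - lam) * √(x - 1))⁻¹) :=
    by fun_prop
  have bound {g : ℝ → ℝ} {s : Set ℝ} (hs : MeasurableSet s) (hg : IntegrableOn g s)
      (hle : ∀ x ∈ s, (√(x + 1) * √(x - lam) * √(x - 1))⁻¹ ≤ g x) :
      IntegrableOn (fun x ↦ (√(x + 1) * √(x - lam) * √(x - 1))⁻¹) s := by
    refine Integrable.mono' hg hmeas.restrict (ae_restrict_of_forall_mem hs fun x hx ↦ ?_)
    rw [Real.norm_of_nonneg (by positivity)]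
    exact hle x hx
  rw [← Ioc_union_Ioi_eq_Ioi (show (1 : ℝ) ≤ 2 by norm_num)]
  refine (bound measurableSet_Ioc ?_ fun x hx ↦ inv_sqrt_mul_le_of_one_lt hlam hx.1).union
    (bound measurableSet_Ioi ?_ fun x hx ↦ inv_sqrt_mul_le_of_two_le hlam.le (le_of_lt hx))
  · have h := (intervalIntegral.intervalIntegrable_rpow' (r := -(1 / 2)) (by norm_num)
      (a := 0) (b := 1)).comp_sub_right 1
    norm_num at h
    exact ((intervalIntegrable_iff_integrableOn_Ioc_of_le (by norm_num)).1 h).const_mul _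
  · exact (integrableOn_Ioi_rpow_of_lt (by norm_num) (by norm_num)).const_mul 2

noncomputable def scIntegrand (ζ lam ρ x : ℝ) : ℝ :=
  √(x - ζ + ρ) / (√(x + 1) * √(x - ζ) * √(x - lam) * √(x - 1))

section scIntegrand

variable {ζ lam : ℝ}

theorem measurable_scIntegrand (ρ : ℝ) : Measurable (scIntegrand ζ lam ρ) := by
  unfold scIntegrand; fun_prop

theorem scIntegrand_nonneg (ρ x : ℝ) : 0 ≤ scIntegrand ζ lam ρ x := by
  unfold scIntegrand; positivity

theorem scIntegrand_mono (x : ℝ) : Monotone fun ρ ↦ scIntegrand ζ lam ρ x :=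
  fun _ _ hρ ↦ by dsimp only [scIntegrand]; gcongr

theorem scIntegrand_le_one_add_div_mul {δ r x : ℝ} (hδ : 0 < δ) (hx : δ ≤ x - ζ) (hr : 0 ≤ r) :
    scIntegrand ζ lam r x ≤ (1 + r / (2 * δ)) * scIntegrand ζ lam 0 x := by
  unfold scIntegrand
  rw [add_zero, ← mul_div_assoc]
  gcongr
  exact Real.sqrt_add_le_one_add_div_mul_sqrt hδ hx hr

theorem scIntegrand_zero {x : ℝ} (hx : ζ < x) :
    scIntegrand ζ lam 0 x = (√(x + 1) * √(x - lam) * √(x - 1))⁻¹ := by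
  have : √(x - ζ) ≠ 0 := (Real.sqrt_pos.2 (sub_pos.2 hx)).ne'
  unfold scIntegrand
  rw [add_zero]
  field_simp

theorem integrableOn_scIntegrand_zero (hζ : ζ < 1) (hlam : lam < 1) :
    IntegrableOn (scIntegrand ζ lam 0) (Ioi 1) :=
  (integrableOn_inv_sqrt_mul hlam).congr_fun
    (fun _ hx ↦ (scIntegrand_zero (hζ.trans hx)).symm) measurableSet_Ioi

theorem setIntegral_scIntegrand_zero_pos (hζ : ζ < 1) (hlam : lam < 1) :
    0 < ∫ x in Ioi 1, scIntegrand ζ lam 0 x := by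
  rw [setIntegral_pos_iff_support_of_nonneg_ae (ae_of_all _ (scIntegrand_nonneg 0))
    (integrableOn_scIntegrand_zero hζ hlam)]
  have hsupp : Ioi 1 ⊆ Function.support (scIntegrand ζ lam 0) := fun x hx ↦ by
    have hx : (1 : ℝ) < x := hx
    rw [Function.mem_support, scIntegrand_zero (hζ.trans hx)]
    exact (inv_pos.2 (mul_pos (mul_pos (Real.sqrt_pos.2 (by linarith))
      (Real.sqrt_pos.2 (by linarith))) (Real.sqrt_pos.2 (by linarith)))).ne'
  rw [inter_eq_self_of_subset_right hsupp, Real.volume_Ioi]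
  exact ENNReal.zero_lt_top

end scIntegrand

theorem stmt11_general (δ₀ ζ lam r : ℝ) (hδ₀ : 0 < δ₀)
    (hζlam : ζ < lam) (hlam : lam ≤ 1 - δ₀) (hr : 0 ≤ r)
    (h : ℝ → ℝ → ℝ)
    (hdef : ∀ ρ x, h ρ x = Real.sqrt (x - ζ + ρ) /
      (Real.sqrt (x + 1) * Real.sqrt (x - ζ) * Real.sqrt (x - lam) *
        Real.sqrt (x - 1)))
    (J : ℝ → ℝ) (hJ : ∀ ρ, J ρ = ∫ x in Ioi (1 : ℝ), h ρ x)
    (F : ℝ → ℝ → ℝ) (hF : ∀ y ρ, F y ρ = ∫ x in (1 : ℝ)..y, h ρ x) :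
    ∀ y : ℝ, 1 ≤ y → |F y r / J r - F y 0 / J 0| ≤ r / (2 * δ₀) := by
  intro y hy
  obtain rfl : h = scIntegrand ζ lam := funext fun ρ ↦ funext (hdef ρ)
  have hlam1 : lam < 1 := by linarith
  have hζ1 : ζ < 1 := hζlam.trans hlam1
  rw [hF, hF, hJ, hJ, intervalIntegral.integral_of_le hy, intervalIntegral.integral_of_le hy]
  refine abs_setIntegral_div_sub_setIntegral_div_le Ioc_subset_Ioi_self
    (integrableOn_scIntegrand_zero hζ1 hlam1) (measurable_scIntegrand r).aestronglyMeasurable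
    (ae_of_all _ (scIntegrand_nonneg 0)) (ae_of_all _ fun x ↦ scIntegrand_mono x hr)
    (ae_restrict_of_forall_mem measurableSet_Ioi fun x hx ↦ ?_)
    (setIntegral_scIntegrand_zero_pos hζ1 hlam1)
  exact scIntegrand_le_one_add_div_mul hδ₀ (by linarith [mem_Ioi.1 hx]) hr

/-- Comparison of the normalized Schwarz–Christoffel boundary parametrizations: with
`h_r(x) = √(x−ζ+r)/(√(x+1)·√(x−ζ)·√(x−λ)·√(x−1))`, `J(r) = ∫₁^∞ h_r` and
`F(y,r) = ∫₁^y h_r`, for every `y ≥ 1` one has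
`|F(y,r)/J(r) − F(y,0)/J(0)| ≤ r/(2δ₀)`. -/
theorem stmt11 (δ₀ ζ lam r : ℝ) (hδ₀ : 0 < δ₀) (hδ₁ : δ₀ < 1)
    (hζ : -1 + δ₀ ≤ ζ) (hζlam : ζ < lam) (hlam : lam ≤ 1 - δ₀) (hr : 0 ≤ r)
    (h : ℝ → ℝ → ℝ)
    (hdef : ∀ ρ x, h ρ x = Real.sqrt (x - ζ + ρ) /
      (Real.sqrt (x + 1) * Real.sqrt (x - ζ) * Real.sqrt (x - lam) *
        Real.sqrt (x - 1)))
    (J : ℝ → ℝ) (hJ : ∀ ρ, J ρ = ∫ x in Ioi (1 : ℝ), h ρ x)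
    (F : ℝ → ℝ → ℝ) (hF : ∀ y ρ, F y ρ = ∫ x in (1 : ℝ)..y, h ρ x) :
    ∀ y : ℝ, 1 ≤ y → |F y r / J r - F y 0 / J 0| ≤ r / (2 * δ₀) :=
  stmt11_general δ₀ ζ lam r hδ₀ hζlam hlam hr h hdef J hJ F hF
end
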